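/- arXiv:1704.04052 — 2 statements merged into one kernel-verified Lean document; each statement's English description precedes it below -/
import Mathlib

section
/- Let A be a real n×n matrix with unit column sums such that some power A^k has all entries strictly positive. Then the eigenspace of A for the eigenvalue 1, namely {v ∈ ℝⁿ : A·v = v}, is one-dimensional. -/
open Matrix Finset Module

/-- Unit column sums are preserved by matrix powers. -/
lemma colsum_pow {n : ℕ} (A : Matrix (Fin n) (Fin n) ℝ) (hA : ∀ j, ∑ i, A i j = 1) :
    ∀ (k : ℕ) (j), ∑ i, (A ^ k) i j = 1 := by
  intro k
  induction k with
  | zero =>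
    intro j
    simp [Matrix.one_apply]
  | succ m ih =>
    intro j
    rw [pow_succ]
    simp only [Matrix.mul_apply]
    rw [Finset.sum_comm]
    calc ∑ l, ∑ i, (A ^ m) i l * A l j
        = ∑ l, (∑ i, (A ^ m) i l) * A l j := by simp [Finset.sum_mul]
      _ = ∑ l, A l j := by simp [ih]
      _ = 1 := hA j

/-- A fixed vector of a strictly positive row-stochastic matrix is constant. -/
lemma fixed_const {n : ℕ} (hn : 0 < n) (P : Matrix (Fin n) (Fin n) ℝ)
    (hpos : ∀ i j, 0 < P i j) (hrow : ∀ i, ∑ j, P i j = 1)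
    (u : Fin n → ℝ) (hu : P.mulVec u = u) : ∀ i j, u i = u j := by
  obtain ⟨i0, -, hi0⟩ := Finset.exists_max_image Finset.univ u ⟨⟨0, hn⟩, Finset.mem_univ _⟩
  have key : ∀ j, u j = u i0 := by
    have h1 : ∑ j, P i0 j * u j = u i0 := by
      have := congrFun hu i0
      simpa [Matrix.mulVec, dotProduct] using this
    have h2 : ∑ j, P i0 j * u i0 = u i0 := by
      rw [← Finset.sum_mul, hrow, one_mul]
    have hle : ∀ j ∈ Finset.univ, P i0 j * u j ≤ P i0 j * u i0 := fun j _ =>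
      mul_le_mul_of_nonneg_left (hi0 j (Finset.mem_univ _)) (hpos i0 j).le
    have heq := (Finset.sum_eq_sum_iff_of_le hle).mp (by rw [h1, h2])
    intro j
    have := heq j (Finset.mem_univ j)
    exact (mul_left_cancel₀ (hpos i0 j).ne' this.symm).symm
  intro i j
  rw [key i, key j]

/-- If `A` (an `n × n` real matrix, `n ≥ 1`) has unit column sums and some power `A ^ k` has
all entries strictly positive, then the eigenspace `{v : A · v = v}` of `A` for the
eigenvalue `1` is one-dimensional. -/
theorem eigenspace_one_dim {n : ℕ} (hn : 0 < n)
    (A : Matrix (Fin n) (Fin n) ℝ) (hA : ∀ j, ∑ i, A i j = 1)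
    (hprim : ∃ k : ℕ, 0 < k ∧ ∀ i j, 0 < (A ^ k) i j) :
    Module.finrank ℝ ↥(LinearMap.ker (Matrix.mulVecLin (A - 1))) = 1 := by
  obtain ⟨k, -, hpos⟩ := hprim
  have ones_ne : (fun _ : Fin n => (1 : ℝ)) ≠ 0 := by
    intro h
    have := congrFun h ⟨0, hn⟩
    simp at this
  -- column sums of A ^ k are 1
  have hBsum : ∀ j, ∑ i, (A ^ k) i j = 1 := colsum_pow A hA k
  set P : Matrix (Fin n) (Fin n) ℝ := (A ^ k)ᵀ with hP
  have hProw : ∀ i, ∑ j, P i j = 1 := fun i => hBsum i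
  have hPpos : ∀ i j, 0 < P i j := fun i j => hpos j i
  -- kernel of P - 1 is the span of the all-ones vector
  have hker : LinearMap.ker (Matrix.mulVecLin (P - 1)) =
      Submodule.span ℝ {fun _ : Fin n => (1 : ℝ)} := by
    apply le_antisymm
    · intro u hu
      have hu' : P.mulVec u = u := by
        have : (P - 1).mulVec u = 0 := hu
        rw [Matrix.sub_mulVec, Matrix.one_mulVec, sub_eq_zero] at this
        exact this
      have hconst := fixed_const hn P hPpos hProw u hu'
      have : u = u ⟨0, hn⟩ • (fun _ : Fin n => (1 : ℝ)) := by
        funext i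
        simp [hconst i ⟨0, hn⟩]
      rw [this]
      exact Submodule.smul_mem _ _ (Submodule.mem_span_singleton_self _)
    · rw [Submodule.span_singleton_le_iff_mem]
      show (P - 1).mulVec (fun _ => (1 : ℝ)) = 0
      rw [Matrix.sub_mulVec, Matrix.one_mulVec, sub_eq_zero]
      funext i
      simp [Matrix.mulVec, dotProduct, hProw i]
  have hfk : finrank ℝ ↥(LinearMap.ker (Matrix.mulVecLin (P - 1))) = 1 := by
    rw [hker]
    exact finrank_span_singleton ones_ne
  -- rank-nullity and rank of transpose
  have hrn : ∀ M : Matrix (Fin n) (Fin n) ℝ,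
      M.rank + finrank ℝ ↥(LinearMap.ker M.mulVecLin) = n := by
    intro M
    have := LinearMap.finrank_range_add_finrank_ker M.mulVecLin
    rwa [Module.finrank_pi, Fintype.card_fin] at this
  have htr : (A ^ k - 1)ᵀ = P - 1 := by
    rw [Matrix.transpose_sub, Matrix.transpose_one, hP]
  have hrank : (A ^ k - 1).rank = (P - 1).rank := by
    rw [← htr, Matrix.rank_transpose]
  have hfB : finrank ℝ ↥(LinearMap.ker (Matrix.mulVecLin (A ^ k - 1))) = 1 := by
    have h1 := hrn (A ^ k - 1)
    have h2 := hrn (P - 1)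
    omega
  -- ker (A - 1) ≤ ker (A ^ k - 1)
  have hsub : LinearMap.ker (Matrix.mulVecLin (A - 1)) ≤
      LinearMap.ker (Matrix.mulVecLin (A ^ k - 1)) := by
    intro v hv
    have hv' : A.mulVec v = v := by
      have : (A - 1).mulVec v = 0 := hv
      rw [Matrix.sub_mulVec, Matrix.one_mulVec, sub_eq_zero] at this
      exact this
    have hpow : ∀ m : ℕ, (A ^ m).mulVec v = v := by
      intro m
      induction m with
      | zero => simp
      | succ l ih => rw [pow_succ, ← Matrix.mulVec_mulVec, hv', ih]
    show (A ^ k - 1).mulVec v = 0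
    rw [Matrix.sub_mulVec, Matrix.one_mulVec, hpow k, sub_self]
  have hle : finrank ℝ ↥(LinearMap.ker (Matrix.mulVecLin (A - 1))) ≤ 1 := by
    rw [← hfB]
    exact Submodule.finrank_mono hsub
  -- nontriviality: det (A - 1) = 0
  have hdet : (A - 1).det = 0 := by
    rw [← Matrix.det_transpose]
    rw [← Matrix.exists_mulVec_eq_zero_iff]
    refine ⟨fun _ => (1 : ℝ), ones_ne, ?_⟩
    rw [Matrix.transpose_sub, Matrix.transpose_one, Matrix.sub_mulVec,
      Matrix.one_mulVec, sub_eq_zero]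
    funext i
    simp [Matrix.mulVec, dotProduct, hA i]
  obtain ⟨v, hvne, hv⟩ := (Matrix.exists_mulVec_eq_zero_iff).mpr hdet
  have hvmem : v ∈ LinearMap.ker (Matrix.mulVecLin (A - 1)) := hv
  have hpos' : 0 < finrank ℝ ↥(LinearMap.ker (Matrix.mulVecLin (A - 1))) := by
    rw [Module.finrank_pos_iff_exists_ne_zero]
    exact ⟨⟨v, hvmem⟩, by simp [Subtype.ext_iff, hvne]⟩
  omega
end

section
/- Let B be a real n×n matrix with nonnegative off-diagonal entries (B_{ij} ≥ 0 for i ≠ j) and zero column sums (∑_i B_{ij} = 0 for every j), and let τ > 0. Then the matrix I − τB is invertible, and its inverse (I − τB)⁻¹ is nonnegative, has strictly positive diagonal entries, and has unit column sums. -/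
/-!
`M = 1 - τ • B` has nonpositive off-diagonal entries and unit column sums. For such a matrix the
discrete minimum principle holds for `v ᵥ* M`: at a minimal entry `v j`, the column sum gives
`(v ᵥ* M) j ≤ v j`, so `0 ≤ v ᵥ* M` forces `0 ≤ v`. Applied to `±v` it gives injectivity,
applied to the rows of `M⁻¹` it gives `0 ≤ M⁻¹`, and then `1 = (M⁻¹ * M) i i ≤ M⁻¹ i i * M i i`
makes the diagonal positive. The column sums pass to the inverse since `1 ᵥ* M = 1`.
-/

open Finset

namespace Matrix

variable {ι R : Type*} [Fintype ι]

section ZMatrix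

variable [Field R] [LinearOrder R] [IsStrictOrderedRing R] {A : Matrix ι ι R}

theorem nonneg_of_nonneg_vecMul_of_sum_col_pos (hoff : ∀ i j, i ≠ j → A i j ≤ 0)
    (hcol : ∀ j, 0 < ∑ i, A i j) {v : ι → R} (hv : 0 ≤ v ᵥ* A) : 0 ≤ v := by
  intro k
  by_contra! hk
  obtain ⟨j, -, hj⟩ := exists_min_image univ v ⟨k, mem_univ k⟩
  have hvj : v j < 0 := (hj k (mem_univ k)).trans_lt hk
  have hle : (v ᵥ* A) j ≤ v j * ∑ i, A i j := by
    rw [vecMul, dotProduct, mul_sum]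
    refine sum_le_sum fun i _ => ?_
    rcases eq_or_ne i j with rfl | hij
    · rfl
    · exact mul_le_mul_of_nonpos_right (hj i (mem_univ i)) (hoff i j hij)
  linarith [show (0 : R) ≤ (v ᵥ* A) j from hv j, mul_neg_of_neg_of_pos hvj (hcol j)]

variable [DecidableEq ι]

theorem det_ne_zero_of_nonpos_of_sum_col_pos (hoff : ∀ i j, i ≠ j → A i j ≤ 0)
    (hcol : ∀ j, 0 < ∑ i, A i j) : A.det ≠ 0 := by
  intro hdet
  obtain ⟨v, hv0, hv⟩ := exists_vecMul_eq_zero_iff.mpr hdet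
  have hpos : 0 ≤ v := nonneg_of_nonneg_vecMul_of_sum_col_pos hoff hcol hv.ge
  have hneg : 0 ≤ -v :=
    nonneg_of_nonneg_vecMul_of_sum_col_pos hoff hcol (by rw [neg_vecMul, hv, neg_zero])
  exact hv0 (le_antisymm (neg_nonneg.mp hneg) hpos)

theorem inv_apply_nonneg_of_sum_col_pos (hoff : ∀ i j, i ≠ j → A i j ≤ 0)
    (hcol : ∀ j, 0 < ∑ i, A i j) (i j : ι) : 0 ≤ A⁻¹ i j := by
  have hunit : IsUnit A.det := (det_ne_zero_of_nonpos_of_sum_col_pos hoff hcol).isUnit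
  refine nonneg_of_nonneg_vecMul_of_sum_col_pos hoff hcol ?_ j
  rw [← mul_apply_eq_vecMul, nonsing_inv_mul A hunit]
  intro k
  by_cases h : i = k <;> simp [one_apply, h]

theorem inv_apply_self_pos_of_sum_col_pos (hoff : ∀ i j, i ≠ j → A i j ≤ 0)
    (hcol : ∀ j, 0 < ∑ i, A i j) (i : ι) : 0 < A⁻¹ i i := by
  have hunit : IsUnit A.det := (det_ne_zero_of_nonpos_of_sum_col_pos hoff hcol).isUnit
  have hoff_terms : ∑ j ∈ univ.erase i, A⁻¹ i j * A j i ≤ 0 :=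
    sum_nonpos fun j hj =>
      mul_nonpos_of_nonneg_of_nonpos (inv_apply_nonneg_of_sum_col_pos hoff hcol i j)
        (hoff j i (ne_of_mem_erase hj))
  have hone : A⁻¹ i i * A i i + ∑ j ∈ univ.erase i, A⁻¹ i j * A j i = 1 :=
    (add_sum_erase univ (fun j => A⁻¹ i j * A j i) (mem_univ i)).trans
      (by rw [← mul_apply, nonsing_inv_mul A hunit, one_apply_eq])
  refine (inv_apply_nonneg_of_sum_col_pos hoff hcol i i).lt_of_ne fun h => ?_
  rw [← h, zero_mul, zero_add] at hone
  linarith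

end ZMatrix

theorem sum_inv_apply_eq_one [DecidableEq ι] [CommRing R] {A : Matrix ι ι R} (hA : IsUnit A.det)
    (hcol : ∀ j, ∑ i, A i j = 1) (j : ι) : ∑ i, A⁻¹ i j = 1 := by
  have hA1 : (fun _ => 1) ᵥ* A = fun _ => 1 := funext fun k => by simp [vecMul, dotProduct, hcol]
  calc ∑ i, A⁻¹ i j = ((fun _ => 1) ᵥ* A⁻¹) j := by simp [vecMul, dotProduct]
    _ = ((fun _ => 1) ᵥ* A ᵥ* A⁻¹) j := by rw [hA1]
    _ = 1 := by rw [vecMul_vecMul, mul_nonsing_inv A hA, vecMul_one]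

end Matrix

open Matrix in
/-- If `B` has nonnegative off-diagonal entries and zero column sums, then for every `τ > 0`
the matrix `I - τ • B` is invertible and its inverse is nonnegative, has strictly positive
diagonal entries, and has unit column sums. -/
theorem implicit_osmosis_operator {n : ℕ} (B : Matrix (Fin n) (Fin n) ℝ)
    (hoff : ∀ i j, i ≠ j → 0 ≤ B i j) (hcol : ∀ j, ∑ i, B i j = 0)
    (τ : ℝ) (hτ : 0 < τ) :
    IsUnit (1 - τ • B) ∧
      (∀ i j, 0 ≤ (1 - τ • B)⁻¹ i j) ∧
      (∀ i, 0 < (1 - τ • B)⁻¹ i i) ∧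
      (∀ j, ∑ i, (1 - τ • B)⁻¹ i j = 1) := by
  have hoffM : ∀ i j, i ≠ j → (1 - τ • B) i j ≤ 0 := fun i j hij => by
    simpa [one_apply_ne hij] using mul_nonneg hτ.le (hoff i j hij)
  have hcolM : ∀ j, ∑ i, (1 - τ • B) i j = 1 := fun j => by
    simp [one_apply, sum_sub_distrib, ← mul_sum, hcol j]
  have hcolM_pos : ∀ j, 0 < ∑ i, (1 - τ • B) i j := fun j => by rw [hcolM j]; exact one_pos
  have hdet : IsUnit (1 - τ • B).det :=
    (det_ne_zero_of_nonpos_of_sum_col_pos hoffM hcolM_pos).isUnit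
  exact ⟨(isUnit_iff_isUnit_det _).mpr hdet, inv_apply_nonneg_of_sum_col_pos hoffM hcolM_pos,
    inv_apply_self_pos_of_sum_col_pos hoffM hcolM_pos, sum_inv_apply_eq_one hdet hcolM⟩
end
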